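/- For every α ∈ ℂ the quantum dimension of the Verma module vanishes: qdim(V_α) = 0. For every l ∈ ℤ and 0 ≤ n ≤ r−2, qdim(S_n^{lr}) = (−1)^{n+l+lr} [n+1], which is nonzero. -/

import Mathlib

/-! Both quantum dimensions are traces of the diagonal operator `K^{1-r}`. On `V_α` the weights
`α + r - 1 - 2i` form an arithmetic progression, so the eigenvalues of `K^{1-r}` form a geometric
progression of length `r` whose ratio `q^{2(r-1)}` is a primitive `r`-th root of unity, and the
trace vanishes. On `S_n^{lr}` the weights are the integers `w = lr + n - 2i`, and `q^r = -1` gives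
`q^{(1-r)w} = (-q)^w`, so the trace is `(-1)^{n+l+lr} Σ_i q^{n-2i} = (-1)^{n+l+lr} [n+1]`. Finally
`[n+1] ≠ 0` because `q²` is a primitive `r`-th root of unity and `0 < n + 1 < r`. -/

noncomputable section

open scoped TensorProduct

namespace Unrolled

/-- `q^z = exp(π √-1 z / r)`. -/
def qc (r : ℕ) (z : ℂ) : ℂ := Complex.exp (Real.pi * Complex.I * z / r)

/-- `{z} = q^z - q^{-z}`. -/
def qbrk (r : ℕ) (z : ℂ) : ℂ := qc r z - qc r (-z)

/-- `[z] = {z}/{1}`. -/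
def qint (r : ℕ) (z : ℂ) : ℂ := qbrk r z / qbrk r 1

/-- `{n}! = ∏_{i=1}^n {i}`. -/
def qbrkFact (r n : ℕ) : ℂ := ∏ i ∈ Finset.range n, qbrk r ((i : ℂ) + 1)

/-- `[n]! = ∏_{i=1}^n [i]`. -/
def qintFact (r n : ℕ) : ℂ := ∏ i ∈ Finset.range n, qint r ((i : ℂ) + 1)

/-- The data of five operators `K, K⁻¹, H, E, F` on a complex vector space. -/
structure Ops (V : Type) [AddCommGroup V] [Module ℂ V] where
  K : Module.End ℂ V
  Kinv : Module.End ℂ V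
  H : Module.End ℂ V
  E : Module.End ℂ V
  F : Module.End ℂ V

/-- A module over the restricted unrolled quantum group `Ū = Ū_q^H(sl₂(ℂ))`:
five operators satisfying the defining relations of `Ū`. -/
structure Rep (r : ℕ) (V : Type) [AddCommGroup V] [Module ℂ V] extends Ops V where
  rel_KKinv : K * Kinv = 1
  rel_KinvK : Kinv * K = 1
  rel_HK : H * K = K * H
  rel_HE : H * E - E * H = (2 : ℂ) • E
  rel_HF : H * F - F * H = (-2 : ℂ) • F
  rel_KE : K * E = qc r 2 • (E * K)
  rel_KF : K * F = qc r (-2) • (F * K)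
  rel_EF : E * F - F * E = (qbrk r 1)⁻¹ • (K - Kinv)
  rel_Er : E ^ r = 0
  rel_Fr : F ^ r = 0

variable {V W U : Type} [AddCommGroup V] [Module ℂ V] [AddCommGroup W] [Module ℂ W]
  [AddCommGroup U] [Module ℂ U]

/-- A `Ū`-submodule: a subspace invariant under the five operators. -/
def Ops.Invariant (A : Ops V) (p : Submodule ℂ V) : Prop :=
  (∀ v ∈ p, A.K v ∈ p) ∧ (∀ v ∈ p, A.Kinv v ∈ p) ∧ (∀ v ∈ p, A.H v ∈ p) ∧
    (∀ v ∈ p, A.E v ∈ p) ∧ (∀ v ∈ p, A.F v ∈ p)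

/-- A simple `Ū`-module: nonzero, with no nonzero proper invariant subspace. -/
def Ops.IsSimple (A : Ops V) : Prop :=
  (∃ v : V, v ≠ 0) ∧ ∀ p : Submodule ℂ V, A.Invariant p → p = ⊥ ∨ p = ⊤

/-- A weight module: finite dimensional, a direct sum of `H`-eigenspaces, on which `K`
acts by `q^μ` on the `H`-eigenspace of eigenvalue `μ`. -/
structure IsWeight (r : ℕ) {V : Type} [AddCommGroup V] [Module ℂ V] (A : Ops V) : Prop where
  finDim : FiniteDimensional ℂ V
  sup_eigenspaces : (⨆ μ : ℂ, Module.End.eigenspace A.H μ) = ⊤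
  K_apply : ∀ (μ : ℂ), ∀ v ∈ Module.End.eigenspace A.H μ, A.K v = qc r μ • v

/-- A `Ū`-linear map. -/
def IsEquivariant (A : Ops V) (B : Ops W) (f : V →ₗ[ℂ] W) : Prop :=
  (∀ v, f (A.K v) = B.K (f v)) ∧ (∀ v, f (A.Kinv v) = B.Kinv (f v)) ∧
    (∀ v, f (A.H v) = B.H (f v)) ∧ (∀ v, f (A.E v) = B.E (f v)) ∧
    (∀ v, f (A.F v) = B.F (f v))

/-- Isomorphism of `Ū`-modules. -/
def OpsIso (A : Ops V) (B : Ops W) : Prop :=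
  ∃ e : V ≃ₗ[ℂ] W, IsEquivariant A B (e : V →ₗ[ℂ] W)

/-- The weight `α + r - 1 - 2i` of the basis vector `v_i` of the Verma module `V_α`. -/
def wt (r : ℕ) (α : ℂ) (i : ℕ) : ℂ := α + r - 1 - 2 * i

/-- The coefficient `{i}{i-α}/{1}²` occurring in `E v_i`. -/
def cE (r : ℕ) (α : ℂ) (i : ℕ) : ℂ := qbrk r i * qbrk r ((i : ℂ) - α) / qbrk r 1 ^ 2

/-- The Verma module `V_α` of highest weight `α + r - 1`, realized on `Fin r → ℂ`
with basis `v_0, …, v_{r-1}`. -/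
def vermaOps (r : ℕ) (α : ℂ) : Ops (Fin r → ℂ) where
  K := (Matrix.diagonal fun i : Fin r => qc r (wt r α (i : ℕ))).mulVecLin
  Kinv := (Matrix.diagonal fun i : Fin r => qc r (-wt r α (i : ℕ))).mulVecLin
  H := (Matrix.diagonal fun i : Fin r => wt r α (i : ℕ)).mulVecLin
  E := (Matrix.of fun i j : Fin r =>
    if (j : ℕ) = (i : ℕ) + 1 then cE r α (j : ℕ) else 0).mulVecLin
  F := (Matrix.of fun i j : Fin r =>
    if (i : ℕ) = (j : ℕ) + 1 then (1 : ℂ) else 0).mulVecLin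

/-- `α_{l,n} = (l-1)r + n + 1`, so that `S_n^{lr}` is a quotient of `V_{α_{l,n}}`. -/
def aln (r : ℕ) (l : ℤ) (n : ℕ) : ℂ := ((l : ℂ) - 1) * r + n + 1

/-- The simple module `S_n^{lr}` of highest weight `lr + n` and dimension `n+1`,
realized on `Fin (n+1) → ℂ`. -/
def smodOps (r : ℕ) (l : ℤ) (n : ℕ) : Ops (Fin (n + 1) → ℂ) where
  K := (Matrix.diagonal fun i : Fin (n + 1) => qc r (wt r (aln r l n) (i : ℕ))).mulVecLin
  Kinv := (Matrix.diagonal fun i : Fin (n + 1) => qc r (-wt r (aln r l n) (i : ℕ))).mulVecLin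
  H := (Matrix.diagonal fun i : Fin (n + 1) => wt r (aln r l n) (i : ℕ)).mulVecLin
  E := (Matrix.of fun i j : Fin (n + 1) =>
    if (j : ℕ) = (i : ℕ) + 1 then cE r (aln r l n) (j : ℕ) else 0).mulVecLin
  F := (Matrix.of fun i j : Fin (n + 1) =>
    if (i : ℕ) = (j : ℕ) + 1 then (1 : ℂ) else 0).mulVecLin

/-- `α ∈ (ℂ∖ℤ) ∪ rℤ`. -/
def goodα (r : ℕ) (α : ℂ) : Prop := (¬∃ n : ℤ, α = (n : ℂ)) ∨ ∃ m : ℤ, α = (r : ℂ) * m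

/-- The coevaluation element `Σ_i v_i ⊗ v_i^∨ ∈ V ⊗ V^∨` for `V = Fin m → ℂ` with its
standard basis. -/
def coevEl (m : ℕ) : (Fin m → ℂ) ⊗[ℂ] Module.Dual ℂ (Fin m → ℂ) :=
  ∑ i : Fin m, Pi.single i (1 : ℂ) ⊗ₜ[ℂ] (LinearMap.proj i : (Fin m → ℂ) →ₗ[ℂ] ℂ)

/-- The coevaluation `coev : ℂ → V ⊗ V^∨`, `1 ↦ Σ_i v_i ⊗ v_i^∨`. -/
def coevMap (m : ℕ) : ℂ →ₗ[ℂ] (Fin m → ℂ) ⊗[ℂ] Module.Dual ℂ (Fin m → ℂ) :=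
  LinearMap.toSpanSingleton ℂ _ (coevEl m)

/-- The evaluation `ev̂ : V ⊗ V^∨ → ℂ`, `v ⊗ f ↦ f (g v)`, where `g` should be taken
to be the action of `K^{1-r}`. -/
def evHatMap (m : ℕ) (g : Module.End ℂ (Fin m → ℂ)) :
    (Fin m → ℂ) ⊗[ℂ] Module.Dual ℂ (Fin m → ℂ) →ₗ[ℂ] ℂ :=
  TensorProduct.lift ((LinearMap.applyₗ :
    (Fin m → ℂ) →ₗ[ℂ] (Module.Dual ℂ (Fin m → ℂ) →ₗ[ℂ] ℂ)) ∘ₗ g)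

open Finset

lemma evHatMap_comp_coevMap_one_eq_trace (m : ℕ) (g : Module.End ℂ (Fin m → ℂ)) :
    (evHatMap m g ∘ₗ coevMap m) 1 = LinearMap.trace ℂ _ g := by
  rw [← Matrix.toLin'_toMatrix' g, Matrix.trace_toLin'_eq, Matrix.trace]
  simp [coevMap, coevEl, evHatMap, LinearMap.toMatrix'_apply]

lemma trace_diagonal_mulVecLin_pow {R ι : Type*} [CommRing R] [Fintype ι] [DecidableEq ι]
    (d : ι → R) (k : ℕ) :
    LinearMap.trace R _ ((Matrix.diagonal d).mulVecLin ^ k) = ∑ i, d i ^ k := by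
  rw [← Matrix.toLin'_apply', ← Matrix.toLin'_pow, Matrix.trace_toLin'_eq, Matrix.diagonal_pow,
    Matrix.trace_diagonal]
  rfl

lemma sum_mul_pow_pow_pred_eq_zero {R : Type*} [CommRing R] [IsDomain R] {ξ : R} {r : ℕ}
    (hξ : IsPrimitiveRoot ξ r) (hr : 1 < r) (c : R) :
    ∑ i ∈ range r, (c * ξ ^ i) ^ (r - 1) = 0 := by
  have hcop : (r - 1).Coprime r := (Nat.coprime_self_sub_left hr.le).mpr (Nat.coprime_one_left r)
  simp_rw [mul_pow, ← pow_mul, mul_comm _ (r - 1), pow_mul, ← mul_sum,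
    (hξ.pow_of_coprime _ hcop).geom_sum_eq_zero hr, mul_zero]

lemma sum_range_zpow_mul_sub_inv {K : Type*} [Field K] {q : K} (hq : q ≠ 0) (n : ℕ) :
    (∑ i ∈ range (n + 1), q ^ ((n : ℤ) - 2 * i)) * (q - q⁻¹) =
      q ^ ((n : ℤ) + 1) - q ^ (-((n : ℤ) + 1)) := by
  have hterm : ∀ i : ℕ, q ^ ((n : ℤ) - 2 * i) * (q - q⁻¹) =
      q ^ ((n : ℤ) + 1 - 2 * i) - q ^ ((n : ℤ) + 1 - 2 * ↑(i + 1)) := by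
    intro i
    rw [mul_sub, ← zpow_add_one₀ hq, ← zpow_sub_one₀ hq]
    push_cast; ring_nf
  rw [sum_mul, sum_congr rfl fun i _ => hterm i, sum_range_sub']
  push_cast; ring_nf

lemma zpow_neg_pow_pred {K : Type*} [Field K] {q : K} {r : ℕ} (hr : r ≠ 0) (hq : q ^ r = -1)
    (w : ℤ) : (q ^ (-w)) ^ (r - 1) = (-q) ^ w := by
  have hq0 : q ≠ 0 := by rintro rfl; simp [hr] at hq
  rw [← zpow_natCast, ← zpow_mul, neg_eq_neg_one_mul q, mul_zpow, Nat.cast_sub (by omega),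
    Nat.cast_one]
  have hexp : -w * ((r : ℤ) - 1) = w + (r : ℤ) * (-w) := by ring
  rw [hexp, zpow_add₀ hq0, zpow_mul, zpow_natCast, hq, zpow_neg, ← inv_zpow, inv_neg_one,
    mul_comm]

lemma qc_add (r : ℕ) (z w : ℂ) : qc r (z + w) = qc r z * qc r w := by
  rw [qc, qc, qc, ← Complex.exp_add]; congr 1; ring

lemma qc_intCast (r : ℕ) (k : ℤ) : qc r k = qc r 1 ^ k := by
  rw [qc, qc, ← Complex.exp_int_mul]; congr 1; ring

lemma qc_one_pow_self {r : ℕ} (hr : r ≠ 0) : qc r 1 ^ r = -1 := by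
  rw [← zpow_natCast, ← qc_intCast, ← Complex.exp_pi_mul_I, qc]
  congr 1; push_cast; field_simp

lemma isPrimitiveRoot_qc_one_sq {r : ℕ} (hr : r ≠ 0) : IsPrimitiveRoot (qc r 1 ^ 2) r := by
  convert Complex.isPrimitiveRoot_exp r hr using 1
  rw [← zpow_natCast, ← qc_intCast, qc]; congr 1; push_cast; ring

lemma qbrk_intCast (r : ℕ) (k : ℤ) : qbrk r k = qc r 1 ^ k - qc r 1 ^ (-k) := by
  rw [qbrk, ← Int.cast_neg, qc_intCast, qc_intCast]

lemma qbrk_natCast_ne_zero {r k : ℕ} (hk0 : k ≠ 0) (hkr : k < r) : qbrk r k ≠ 0 := by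
  have hq0 : qc r 1 ≠ 0 := Complex.exp_ne_zero _
  rw [← Int.cast_natCast, qbrk_intCast, sub_ne_zero, Ne,
    ← mul_inv_eq_one₀ (zpow_ne_zero _ hq0), ← zpow_neg, ← zpow_add₀ hq0, neg_neg, ← two_mul, zpow_mul, zpow_natCast]
  exact (isPrimitiveRoot_qc_one_sq (by omega)).pow_ne_one_of_pos_of_lt hk0 hkr

lemma qint_natCast_ne_zero {r k : ℕ} (hk0 : k ≠ 0) (hkr : k < r) : qint r k ≠ 0 :=
  div_ne_zero (qbrk_natCast_ne_zero hk0 hkr)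
    (by exact_mod_cast qbrk_natCast_ne_zero one_ne_zero (by omega))

lemma qc_neg_wt (r : ℕ) (α : ℂ) (i : ℕ) :
    qc r (-wt r α i) = qc r (-(α + r - 1)) * (qc r 1 ^ 2) ^ i := by
  have hwt : -wt r α i = -(α + r - 1) + ((2 * i : ℕ) : ℤ) := by push_cast [wt]; ring
  rw [hwt, qc_add, qc_intCast, zpow_natCast, pow_mul]

lemma qc_neg_wt_aln (r : ℕ) (l : ℤ) (n i : ℕ) :
    qc r (-wt r (aln r l n) i) = qc r 1 ^ (-(l * r + (n - 2 * i)) : ℤ) := by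
  rw [← qc_intCast]; push_cast [wt, aln]; ring_nf

theorem qdim_verma {r : ℕ} (hr : 1 < r) (α : ℂ) :
    (evHatMap r ((vermaOps r α).Kinv ^ (r - 1)) ∘ₗ coevMap r) 1 = 0 := by
  rw [evHatMap_comp_coevMap_one_eq_trace, vermaOps, trace_diagonal_mulVecLin_pow,
    Fin.sum_univ_eq_sum_range (fun i => qc r (-wt r α i) ^ (r - 1))]
  simp_rw [qc_neg_wt]
  exact sum_mul_pow_pow_pred_eq_zero (isPrimitiveRoot_qc_one_sq (by omega)) hr _

lemma sum_range_qc_one_zpow {r : ℕ} (hr : 1 < r) (n : ℕ) :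
    ∑ i ∈ range (n + 1), qc r 1 ^ ((n : ℤ) - 2 * i) = qint r ((n : ℂ) + 1) := by
  have hq0 : qc r 1 ≠ 0 := Complex.exp_ne_zero _
  have h1 : qbrk r 1 ≠ 0 := by exact_mod_cast qbrk_natCast_ne_zero one_ne_zero hr
  have hn := qbrk_intCast r ((n : ℤ) + 1)
  have h1' := qbrk_intCast r 1
  push_cast at hn h1'
  rw [qint, eq_div_iff h1, hn, h1', zpow_one, zpow_neg_one]
  exact sum_range_zpow_mul_sub_inv hq0 n

theorem qdim_smod {r : ℕ} (hr : 1 < r) (l : ℤ) (n : ℕ) :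
    (evHatMap (n + 1) ((smodOps r l n).Kinv ^ (r - 1)) ∘ₗ coevMap (n + 1)) 1 =
      (-1 : ℂ) ^ ((n : ℤ) + l + l * r) * qint r ((n : ℂ) + 1) := by
  have hq : qc r 1 ^ r = -1 := qc_one_pow_self (by omega)
  have hq0 : qc r 1 ≠ 0 := Complex.exp_ne_zero _
  -- `q ^ r = -1` turns the `l r` part of each weight into a sign
  have hterm : ∀ i : ℕ, (-qc r 1) ^ (l * r + (n - 2 * i)) =
      (-1) ^ ((n : ℤ) + l + l * r) * qc r 1 ^ ((n : ℤ) - 2 * i) := by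
    intro i
    have hsign : (-1 : ℂ) ^ (l * r + (n - 2 * i) + l) = (-1) ^ ((n : ℤ) + l + l * r) := by
      rw [show l * r + (n - 2 * i) + l = (n + l + l * r) + 2 * (-i : ℤ) by ring,
        zpow_add₀ (by norm_num), (even_two_mul _).neg_one_zpow, mul_one]
    have hql : qc r 1 ^ (l * r) = (-1) ^ l := by rw [mul_comm, zpow_mul, zpow_natCast, hq]
    rw [neg_eq_neg_one_mul, mul_zpow, zpow_add₀ hq0, hql, ← mul_assoc,
      ← zpow_add₀ (by norm_num), hsign]
  rw [evHatMap_comp_coevMap_one_eq_trace, smodOps, trace_diagonal_mulVecLin_pow,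
    Fin.sum_univ_eq_sum_range (fun i => qc r (-wt r (aln r l n) i) ^ (r - 1))]
  simp_rw [qc_neg_wt_aln, zpow_neg_pow_pred (by omega) hq, hterm, ← mul_sum]
  rw [sum_range_qc_one_zpow hr]

/-- `qdim(V_α) = 0` for every `α ∈ ℂ`, while
`qdim(S_n^{lr}) = (-1)^{n+l+lr} [n+1] ≠ 0`. -/
theorem stmt14 (r : ℕ) (hr : 2 ≤ r) :
    (∀ α : ℂ,
      (evHatMap r ((vermaOps r α).Kinv ^ (r - 1)) ∘ₗ coevMap r) 1 = 0) ∧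
    ∀ (l : ℤ) (n : ℕ), n ≤ r - 2 →
      (evHatMap (n + 1) ((smodOps r l n).Kinv ^ (r - 1)) ∘ₗ coevMap (n + 1)) 1 =
          (-1 : ℂ) ^ ((n : ℤ) + l + l * r) * qint r ((n : ℂ) + 1) ∧
        (-1 : ℂ) ^ ((n : ℤ) + l + l * r) * qint r ((n : ℂ) + 1) ≠ 0 := by
  refine ⟨qdim_verma hr, fun l n hn => ⟨qdim_smod hr l n, ?_⟩⟩
  refine mul_ne_zero (zpow_ne_zero _ (by norm_num)) ?_
  exact_mod_cast qint_natCast_ne_zero (Nat.succ_ne_zero n) (by omega : n + 1 < r)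

end Unrolled
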